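/- arXiv:1909.03581 — 2 statements merged into one kernel-verified Lean document; each statement's English description precedes it below -/
import Mathlib

section
/- Let f be a Schwartz function on ℝ^d and let 1 ≤ k ≤ d. Let 𝒟_k denote the operator of multiplication by the k-th coordinate, (𝒟_k ξ)(r) = r_k ξ(r). Then for every Schwartz function ξ on ℝ^d, the commutator identity 𝒟_k(U(f)ξ) − U(f)(𝒟_k ξ) = U(f_k) ξ holds, where f_k(t) = t_k f(t); that is, [𝒟_k, U(f)] = U(t_k f(t)) on the Schwartz space. -/
open MeasureTheory Complex Filter

noncomputable section

/-- `ℝ^d` as Euclidean space. -/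
abbrev Ed (d : ℕ) : Type := EuclideanSpace ℝ (Fin d)

/-- The pairing `⟨t, θ r⟩` where `θ` acts as a matrix on `r`. -/
def pairing {d : ℕ} (θ : Matrix (Fin d) (Fin d) ℝ) (t r : Ed d) : ℝ :=
  ∑ i, t i * ∑ j, θ i j * r j

/-- The Weyl operator at `t`, acting on functions:
`(U(t)ξ)(r) = exp(−(i/2)⟨t, θr⟩) ξ(r − t)`. -/
def weyl {d : ℕ} (θ : Matrix (Fin d) (Fin d) ℝ) (t : Ed d) (ξ : Ed d → ℂ) : Ed d → ℂ :=
  fun r => Complex.exp (-(Complex.I / 2) * (pairing θ t r : ℂ)) * ξ (r - t)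

/-- The complex Hilbert space `L²(ℝ^d; ℂ)`. -/
abbrev L2 (d : ℕ) := Lp ℂ 2 (volume : Measure (Ed d))
/-- `U(f)` acting pointwise on functions: `(U(f)ξ)(s) = ∫ f(t) (U(t)ξ)(s) dt`. -/
def UfFun {d : ℕ} (θ : Matrix (Fin d) (Fin d) ℝ) (f ξ : Ed d → ℂ) : Ed d → ℂ :=
  fun s => ∫ t : Ed d, f t * weyl θ t ξ s ∂volume

/-! Since `U(t)` translates by `t`, the pointwise identity `𝒟_k U(t) − U(t) 𝒟_k = t_k U(t)` holds;
integrating it against `f` gives the commutator, the splitting of the integral being legitimate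
because `f` is integrable while `ξ` and `r_k ξ` are bounded. -/

section Weyl

variable {d : ℕ} (θ : Matrix (Fin d) (Fin d) ℝ)

theorem continuous_pairing_left (r : Ed d) : Continuous fun t : Ed d => pairing θ t r := by
  unfold pairing
  fun_prop

theorem norm_weyl_apply (t : Ed d) (ξ : Ed d → ℂ) (r : Ed d) :
    ‖weyl θ t ξ r‖ = ‖ξ (r - t)‖ := by
  rw [weyl, norm_mul, Complex.norm_exp]
  simp

theorem weyl_coord_mul_apply (t : Ed d) (ξ : Ed d → ℂ) (k : Fin d) (s : Ed d) :
    weyl θ t (fun r => (r k : ℂ) * ξ r) s = ((s k : ℂ) - t k) * weyl θ t ξ s := by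
  simp only [weyl, PiLp.sub_apply, ofReal_sub]
  ring

theorem integrable_mul_weyl_apply {f ξ : Ed d → ℂ} (hf : Integrable f) (hξ : Continuous ξ)
    {C : ℝ} (hC : ∀ r, ‖ξ r‖ ≤ C) (s : Ed d) :
    Integrable fun t => f t * weyl θ t ξ s := by
  refine hf.mul_bdd ?_ (ae_of_all _ fun t => (norm_weyl_apply θ t ξ s).trans_le (hC _))
  have := continuous_pairing_left θ s
  exact (by unfold weyl; fun_prop : Continuous fun t => weyl θ t ξ s).aestronglyMeasurable

theorem coord_mul_UfFun_sub_UfFun_coord_mul {f ξ : Ed d → ℂ} (hf : Integrable f)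
    (hξ : Continuous ξ) (k : Fin d) {C₀ C₁ : ℝ} (h₀ : ∀ r, ‖ξ r‖ ≤ C₀)
    (h₁ : ∀ r : Ed d, ‖(r k : ℂ) * ξ r‖ ≤ C₁) (s : Ed d) :
    (s k : ℂ) * UfFun θ f ξ s - UfFun θ f (fun r => (r k : ℂ) * ξ r) s
      = UfFun θ (fun t => (t k : ℂ) * f t) ξ s := by
  have hcoord : Continuous fun r : Ed d => (r k : ℂ) * ξ r := by fun_prop
  simp only [UfFun]
  rw [← integral_const_mul, ← integral_sub ((integrable_mul_weyl_apply θ hf hξ h₀ s).const_mul _)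
    (integrable_mul_weyl_apply θ hf hcoord h₁ s)]
  congr 1 with t
  rw [weyl_coord_mul_apply]
  ring

end Weyl

theorem SchwartzMap.norm_coord_mul_le {d : ℕ} (ξ : SchwartzMap (Ed d) ℂ) (k : Fin d) (r : Ed d) :
    ‖(r k : ℂ) * ξ r‖ ≤ SchwartzMap.seminorm ℂ 1 0 ξ :=
  calc ‖(r k : ℂ) * ξ r‖ ≤ ‖r‖ ^ 1 * ‖ξ r‖ := by
        rw [norm_mul, Complex.norm_real, pow_one]
        exact mul_le_mul_of_nonneg_right (PiLp.norm_apply_le r k) (norm_nonneg _)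
    _ ≤ SchwartzMap.seminorm ℂ 1 0 ξ := ξ.norm_pow_mul_le_seminorm ℂ 1 r

theorem statement11_general (d : ℕ) (θ : Matrix (Fin d) (Fin d) ℝ)
    (k : Fin d)
    (f ξ : SchwartzMap (Ed d) ℂ) :
    ∀ s : Ed d,
      (s k : ℂ) * UfFun θ ⇑f ⇑ξ s - UfFun θ ⇑f (fun r => (r k : ℂ) * ξ r) s
        = UfFun θ (fun t => (t k : ℂ) * f t) ⇑ξ s :=
  coord_mul_UfFun_sub_UfFun_coord_mul θ f.integrable ξ.continuous k
    (SchwartzMap.norm_le_seminorm ℂ ξ) (ξ.norm_coord_mul_le k)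

/-- For Schwartz `f` and `ξ`, the commutator of the coordinate multiplication operator
`𝒟_k` with `U(f)` satisfies `𝒟_k(U(f)ξ) − U(f)(𝒟_k ξ) = U(t_k f(t)) ξ`. -/
theorem statement11 (d : ℕ) (hd : 0 < d) (θ : Matrix (Fin d) (Fin d) ℝ)
    (hθ : θ.transpose = -θ) (k : Fin d)
    (f ξ : SchwartzMap (Ed d) ℂ) :
    ∀ s : Ed d,
      (s k : ℂ) * UfFun θ ⇑f ⇑ξ s - UfFun θ ⇑f (fun r => (r k : ℂ) * ξ r) s
        = UfFun θ (fun t => (t k : ℂ) * f t) ⇑ξ s :=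
  statement11_general d θ k f ξ
end
end

section
/- Let ψ be a Schwartz function on ℝ^d with ∫_{ℝ^d} ψ(t) dt = 1, and set ψ_ε(t) = ε^{−d} ψ(t/ε) for ε > 0. Then for every Schwartz function f on ℝ^d, the θ-twisted convolutions ψ_ε *_θ f converge to f uniformly on ℝ^d as ε → 0⁺; that is, sup_{t ∈ ℝ^d} |(ψ_ε *_θ f)(t) − f(t)| → 0. -/
open MeasureTheory Complex Filter

noncomputable section

/-- The θ-twisted convolution: `(f *_θ g)(s) = ∫ exp((i/2)⟨s, θt⟩) f(s − t) g(t) dt`. -/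
def twistedConv {d : ℕ} (θ : Matrix (Fin d) (Fin d) ℝ) (f g : Ed d → ℂ) : Ed d → ℂ :=
  fun s => ∫ t : Ed d, Complex.exp ((Complex.I / 2) * (pairing θ s t : ℂ)) * (f (s - t) * g t) ∂volume

/-- The mollifier rescaling `ψ_ε(t) = ε^{−d} ψ(t/ε)`. -/
def mollify {d : ℕ} (ψ : Ed d → ℂ) (ε : ℝ) : Ed d → ℂ :=
  fun t => (((ε ^ d)⁻¹ : ℝ) : ℂ) * ψ (ε⁻¹ • t)

/-!
Substituting `t = ε u` and using `⟨s, θ s⟩ = 0` (antisymmetry of `θ`) gives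
`(ψ_ε *_θ f)(s) = ∫ exp(-(i ε/2)⟨s, θ u⟩) ψ(u) f(s - ε u) du`. Since `∫ ψ = 1`, subtracting
`f(s) = ∫ ψ(u) f(s) du` leaves an integrand bounded by
`ε ‖u‖ |ψ(u)| (Lip f + ‖θ‖ sup ‖s‖ |f(s)| / 2)`: the Lipschitz bound handles the shift, and
`|e^{ix} - 1| ≤ |x|` handles the phase, whose size `ε |⟨s, θ u⟩|` is compensated by the decay
of `f(s)`. Integrating against the first moment of `ψ` gives a bound `O(ε)` uniform in `s`.
-/

open scoped RealInnerProductSpace NNReal Topology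

lemma norm_exp_I_mul_mul_sub_le (x : ℝ) (c a b : ℂ) :
    ‖exp (I * x) * (c * a) - c * b‖ ≤ ‖c‖ * (‖a - b‖ + |x| * ‖b‖) := by
  have h : exp (I * x) * (c * a) - c * b =
      c * (exp (I * x) * (a - b) + (exp (I * x) - 1) * b) := by
    ring
  rw [h, norm_mul]
  gcongr
  calc _ ≤ ‖exp (I * x) * (a - b)‖ + ‖(exp (I * x) - 1) * b‖ := norm_add_le _ _
    _ ≤ ‖a - b‖ + |x| * ‖b‖ := by
      rw [norm_mul, norm_mul, norm_exp_I_mul_ofReal, one_mul]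
      gcongr
      exact Real.norm_exp_I_mul_ofReal_sub_one_le

lemma tendstoUniformly_nhdsGT_zero_of_norm_sub_le {α E : Type*} [SeminormedAddCommGroup E]
    {F : ℝ → α → E} {g : α → E} {B : ℝ} (h : ∀ ε > 0, ∀ x, ‖F ε x - g x‖ ≤ ε * B) :
    TendstoUniformly F g (𝓝[>] 0) := by
  rw [Metric.tendstoUniformly_iff]
  intro δ hδ
  have hlim : Tendsto (fun ε : ℝ => ε * B) (𝓝[>] 0) (𝓝 0) :=
    ((continuous_id.mul continuous_const).tendsto' 0 0 (zero_mul B)).mono_left nhdsWithin_le_nhds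
  filter_upwards [self_mem_nhdsWithin, hlim.eventually (gt_mem_nhds hδ)] with ε hε hεB x
  rw [dist_comm, dist_eq_norm]
  exact (h ε hε x).trans_lt hεB

lemma SchwartzMap.lipschitzWith {E F : Type*} [NormedAddCommGroup E] [NormedSpace ℝ E]
    [NormedAddCommGroup F] [NormedSpace ℝ F] (f : SchwartzMap E F) :
    LipschitzWith (SchwartzMap.seminorm ℝ 0 1 f).toNNReal f := by
  refine lipschitzWith_of_nnnorm_fderiv_le f.differentiable fun x => ?_
  rw [← NNReal.coe_le_coe, coe_nnnorm, Real.coe_toNNReal _ (apply_nonneg _ _),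
    ← norm_iteratedFDeriv_one]
  exact f.norm_iteratedFDeriv_le_seminorm ℝ 1 x

section TwistedConvolution

variable {d : ℕ} (θ : Matrix (Fin d) (Fin d) ℝ)

lemma pairing_eq_inner (t r : Ed d) :
    pairing θ t r = ⟪t, Matrix.toEuclideanCLM (𝕜 := ℝ) θ r⟫ := by
  rw [Matrix.inner_toEuclideanCLM]; rfl

lemma pairing_sub_right (s a b : Ed d) :
    pairing θ s (a - b) = pairing θ s a - pairing θ s b := by
  simp only [pairing_eq_inner, map_sub, inner_sub_right]

lemma pairing_smul_right (s : Ed d) (c : ℝ) (u : Ed d) :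
    pairing θ s (c • u) = c * pairing θ s u := by
  simp only [pairing_eq_inner, map_smul, real_inner_smul_right]

lemma pairing_self_eq_zero (hθ : θ.transpose = -θ) (s : Ed d) : pairing θ s s = 0 := by
  set T := Matrix.toEuclideanCLM (n := Fin d) (𝕜 := ℝ)
  have hadj : ContinuousLinearMap.adjoint (T θ) = -T θ := by
    rw [← ContinuousLinearMap.star_eq_adjoint, ← map_star, Matrix.star_eq_conjTranspose,
      Matrix.conjTranspose_eq_transpose_of_trivial, hθ, map_neg]
  have h : ⟪s, T θ s⟫ = -⟪s, T θ s⟫ := by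
    conv_lhs => rw [← ContinuousLinearMap.adjoint_inner_left, hadj,
      neg_apply, inner_neg_left, real_inner_comm]
  rw [pairing_eq_inner]
  linarith

lemma abs_pairing_le (s u : Ed d) :
    |pairing θ s u| ≤ ‖Matrix.toEuclideanCLM (𝕜 := ℝ) θ‖ * (‖s‖ * ‖u‖) := by
  set T := Matrix.toEuclideanCLM (𝕜 := ℝ) θ
  rw [pairing_eq_inner]
  calc _ ≤ ‖s‖ * ‖T u‖ := abs_real_inner_le_norm _ _
    _ ≤ ‖s‖ * (‖T‖ * ‖u‖) := by gcongr; exact T.le_opNorm u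
    _ = _ := by ring

lemma continuous_pairing_right (s : Ed d) : Continuous (pairing θ s) := by
  simp only [funext (pairing_eq_inner θ s)]
  fun_prop

lemma twistedConv_mollify_eq_integral (hθ : θ.transpose = -θ) (ψ f : Ed d → ℂ) {ε : ℝ}
    (hε : 0 < ε) (s : Ed d) :
    twistedConv θ (mollify ψ ε) f s =
      ∫ u, exp (I * ↑(-(ε * pairing θ s u) / 2)) * (ψ u * f (s - ε • u)) := by
  set K : Ed d → ℂ := fun u => exp (I * ↑(-(ε * pairing θ s u) / 2)) * (ψ u * f (s - ε • u))
  have hsubst : ∀ t,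
      exp ((I / 2) * ↑(pairing θ s (s - t))) * (mollify ψ ε (s - (s - t)) * f (s - t)) =
        ((ε ^ d)⁻¹ : ℝ) • K (ε⁻¹ • t) := fun t => by
    have hp : pairing θ s (s - t) = -(ε * pairing θ s (ε⁻¹ • t)) := by
      rw [pairing_sub_right, pairing_self_eq_zero θ hθ, pairing_smul_right,
        mul_inv_cancel_left₀ hε.ne']
      ring
    simp only [K, mollify, hp, sub_sub_cancel, smul_inv_smul₀ hε.ne', Complex.real_smul]
    push_cast
    ring_nf
  calc twistedConv θ (mollify ψ ε) f s
      = ∫ t, exp ((I / 2) * ↑(pairing θ s (s - t))) * (mollify ψ ε (s - (s - t)) * f (s - t)) :=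
        (integral_sub_left_eq_self _ _ s).symm
    _ = ∫ t, ((ε ^ d)⁻¹ : ℝ) • K (ε⁻¹ • t) := by simp only [hsubst]
    _ = ∫ u, K u := by
      rw [integral_smul, Measure.integral_comp_inv_smul, finrank_euclideanSpace_fin,
        abs_of_pos (pow_pos hε d), smul_smul, inv_mul_cancel₀ (pow_pos hε d).ne', one_smul]

lemma norm_twistedConv_integrand_sub_le {ψ f : Ed d → ℂ} {L : ℝ≥0} (hf : LipschitzWith L f)
    {C : ℝ} (hC : ∀ x, ‖x‖ * ‖f x‖ ≤ C) {ε : ℝ} (hε : 0 ≤ ε) (s u : Ed d) :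
    ‖exp (I * ↑(-(ε * pairing θ s u) / 2)) * (ψ u * f (s - ε • u)) - ψ u * f s‖ ≤
      ε * ((L + ‖Matrix.toEuclideanCLM (𝕜 := ℝ) θ‖ * C / 2) * (‖u‖ * ‖ψ u‖)) := by
  set T := ‖Matrix.toEuclideanCLM (𝕜 := ℝ) θ‖
  have hlip : ‖f (s - ε • u) - f s‖ ≤ L * (ε * ‖u‖) := by
    simpa [norm_smul, abs_of_nonneg hε] using hf.norm_sub_le (s - ε • u) s
  have hphase : |-(ε * pairing θ s u) / 2| ≤ ε * (T * (‖s‖ * ‖u‖)) / 2 := by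
    rw [abs_div, abs_neg, abs_mul, abs_of_nonneg hε, abs_two]
    gcongr
    exact abs_pairing_le θ s u
  calc _ ≤ ‖ψ u‖ * (‖f (s - ε • u) - f s‖ + |-(ε * pairing θ s u) / 2| * ‖f s‖) :=
        norm_exp_I_mul_mul_sub_le _ _ _ _
    _ ≤ ‖ψ u‖ * (L * (ε * ‖u‖) + ε * (T * (‖s‖ * ‖u‖)) / 2 * ‖f s‖) := by gcongr
    _ = ε * ((L + T * (‖s‖ * ‖f s‖) / 2) * (‖u‖ * ‖ψ u‖)) := by ring
    _ ≤ ε * ((L + T * C / 2) * (‖u‖ * ‖ψ u‖)) := by gcongr; exact hC s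

lemma norm_twistedConv_mollify_sub_le (hθ : θ.transpose = -θ) {ψ f : Ed d → ℂ}
    (hψ : Integrable ψ) (hψ_one : ∫ u, ψ u = 1) (hψ_moment : Integrable fun u => ‖u‖ * ‖ψ u‖)
    {L : ℝ≥0} (hf : LipschitzWith L f) {C : ℝ} (hC : ∀ x, ‖x‖ * ‖f x‖ ≤ C)
    {ε : ℝ} (hε : 0 < ε) (s : Ed d) :
    ‖twistedConv θ (mollify ψ ε) f s - f s‖ ≤
      ε * ((L + ‖Matrix.toEuclideanCLM (𝕜 := ℝ) θ‖ * C / 2) * ∫ u, ‖u‖ * ‖ψ u‖) := by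
  set K : Ed d → ℂ := fun u => exp (I * ↑(-(ε * pairing θ s u) / 2)) * (ψ u * f (s - ε • u))
  have hbound := norm_twistedConv_integrand_sub_le θ (ψ := ψ) hf hC hε.le s
  have hK_meas : AEStronglyMeasurable K := by
    have := continuous_pairing_right θ s
    have := hf.continuous
    fun_prop
  have hdiff : Integrable fun u => K u - ψ u * f s :=
    ((hψ_moment.const_mul _).const_mul ε).mono' (hK_meas.sub (hψ.mul_const _).1)
      (ae_of_all _ hbound)
  have hK : Integrable K :=
    (hdiff.add (hψ.mul_const (f s))).congr (ae_of_all _ fun u => sub_add_cancel _ _)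
  calc ‖twistedConv θ (mollify ψ ε) f s - f s‖ = ‖∫ u, (K u - ψ u * f s)‖ := by
        rw [twistedConv_mollify_eq_integral θ hθ ψ f hε s, integral_sub hK (hψ.mul_const _),
          integral_mul_const, hψ_one, one_mul]
    _ ≤ ∫ u, ε * ((L + ‖Matrix.toEuclideanCLM (𝕜 := ℝ) θ‖ * C / 2) * (‖u‖ * ‖ψ u‖)) :=
        norm_integral_le_of_norm_le ((hψ_moment.const_mul _).const_mul ε) (ae_of_all _ hbound)
    _ = _ := by rw [integral_const_mul, integral_const_mul]

end TwistedConvolution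

theorem statement13_general (d : ℕ) (θ : Matrix (Fin d) (Fin d) ℝ)
    (hθ : θ.transpose = -θ)
    (ψ : SchwartzMap (Ed d) ℂ) (hψ : (∫ t : Ed d, ψ t ∂volume) = 1)
    (f : SchwartzMap (Ed d) ℂ) :
    TendstoUniformly (fun ε : ℝ => twistedConv θ (mollify (⇑ψ) ε) ⇑f) ⇑f
      (nhdsWithin 0 (Set.Ioi 0)) := by
  have hψ_moment : Integrable fun u : Ed d => ‖u‖ * ‖ψ u‖ := by
    simpa using ψ.integrable_pow_mul volume 1
  have hf_decay : ∀ x, ‖x‖ * ‖f x‖ ≤ SchwartzMap.seminorm ℝ 1 0 f := fun x => by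
    simpa using f.norm_pow_mul_le_seminorm ℝ 1 x
  exact tendstoUniformly_nhdsGT_zero_of_norm_sub_le fun ε hε s =>
    norm_twistedConv_mollify_sub_le θ hθ ψ.integrable hψ hψ_moment f.lipschitzWith hf_decay hε s

/-- If `ψ` is a Schwartz function with `∫ ψ = 1`, then for every Schwartz function `f`,
the θ-twisted convolutions `ψ_ε *_θ f` converge to `f` uniformly on `ℝ^d` as `ε → 0⁺`. -/
theorem statement13 (d : ℕ) (hd : 0 < d) (θ : Matrix (Fin d) (Fin d) ℝ)
    (hθ : θ.transpose = -θ)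
    (ψ : SchwartzMap (Ed d) ℂ) (hψ : (∫ t : Ed d, ψ t ∂volume) = 1)
    (f : SchwartzMap (Ed d) ℂ) :
    TendstoUniformly (fun ε : ℝ => twistedConv θ (mollify (⇑ψ) ε) ⇑f) ⇑f
      (nhdsWithin 0 (Set.Ioi 0)) :=
  statement13_general d θ hθ ψ hψ f
end
end
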